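/- arXiv:2109.09581 — 5 statements merged into one kernel-verified Lean document; each statement's English description precedes it below -/
import Mathlib

section
/- Let C be a finite index set, α > 0 a real number, (λ_j)_{j∈C} complex numbers, (μ_j)_{j∈C} pairwise distinct complex numbers, and d ≥ 1 an integer. Assume that for all M > 0 the denominators Mα + μ_j + conj(μ_{j'}) are nonzero and Σ_{j,j'∈C} λ_j · conj(λ_{j'}) / (Mα + μ_j + conj(μ_{j'}))^d = 0. Then λ_j = 0 for all j ∈ C. -/
/-! Clearing denominators turns `∑ λ_j conj λ_{j'} / (z + μ_j + conj μ_{j'})^d` into a polynomial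
that vanishes at the infinitely many points `Mα`, hence identically; evaluating it at a pole `-t`
isolates the total coefficient of `(z + t)^{-d}` (this needs `d ≥ 1`), which therefore vanishes.
For `t = 2 Re μ_{j₀}` with `Re μ_{j₀}` maximal among the `j` with `λ_j ≠ 0`, only diagonal pairs
contribute to that coefficient, so it is a sum of `|λ_j|²` containing `|λ_{j₀}|² > 0`. -/

open Polynomial Finset ComplexConjugate

section PartialFractions

variable {K : Type*} [Field K] [DecidableEq K]

noncomputable def clearedNumerator (s : Finset K) (g : K → K) (d : ℕ) : K[X] :=
  ∑ t ∈ s, C (g t) * ∏ u ∈ s.erase t, (X + C u) ^ d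

theorem eval_clearedNumerator {s : Finset K} {z : K} (hz : ∀ u ∈ s, z + u ≠ 0)
    (g : K → K) (d : ℕ) :
    (clearedNumerator s g d).eval z = (∑ t ∈ s, g t / (z + t) ^ d) * ∏ u ∈ s, (z + u) ^ d := by
  simp only [clearedNumerator, eval_finsetSum, eval_mul, eval_C, eval_prod, eval_pow, eval_add,
    eval_X, sum_mul]
  refine sum_congr rfl fun t ht => ?_
  rw [← mul_prod_erase s (fun u => (z + u) ^ d) ht, ← mul_assoc,
    div_mul_cancel₀ _ (pow_ne_zero _ (hz t ht))]

theorem eval_neg_clearedNumerator {s : Finset K} {t : K} (ht : t ∈ s) (g : K → K) {d : ℕ}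
    (hd : d ≠ 0) :
    (clearedNumerator s g d).eval (-t) = g t * ∏ u ∈ s.erase t, (-t + u) ^ d := by
  simp only [clearedNumerator, eval_finsetSum, eval_mul, eval_C, eval_prod, eval_pow, eval_add,
    eval_X]
  refine sum_eq_single_of_mem t ht fun t' ht' hne => ?_
  rw [prod_eq_zero (mem_erase.2 ⟨hne.symm, ht⟩) (by simp [hd]), mul_zero]

theorem eq_zero_of_sum_div_pow_eq_zero {s : Finset K} {g : K → K} {d : ℕ} (hd : d ≠ 0)
    {S : Set K} (hS : S.Infinite)
    (h : ∀ z ∈ S, (∀ u ∈ s, z + u ≠ 0) ∧ ∑ t ∈ s, g t / (z + t) ^ d = 0) :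
    ∀ t ∈ s, g t = 0 := by
  have hP : clearedNumerator s g d = 0 := by
    refine eq_zero_of_infinite_isRoot _ (hS.mono fun z hz => ?_)
    obtain ⟨hne, hsum⟩ := h z hz
    simp only [Set.mem_ofPred_eq, IsRoot, eval_clearedNumerator hne, hsum, zero_mul]
  intro t ht
  have hprod : ∏ u ∈ s.erase t, (-t + u) ^ d ≠ 0 :=
    prod_ne_zero_iff.2 fun u hu =>
      pow_ne_zero _ (neg_add_eq_zero.not.2 (Ne.symm (ne_of_mem_erase hu)))
  have := eval_neg_clearedNumerator ht g hd
  rw [hP, eval_zero] at this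
  exact (mul_eq_zero.1 this.symm).resolve_right hprod

theorem sum_fiber_eq_zero_of_sum_div_pow_eq_zero {κ : Type*} [Fintype κ] {c a : κ → K} {d : ℕ}
    (hd : d ≠ 0) {S : Set K} (hS : S.Infinite)
    (h : ∀ z ∈ S, (∀ p, z + a p ≠ 0) ∧ ∑ p, c p / (z + a p) ^ d = 0) (t : K) :
    ∑ p with a p = t, c p = 0 := by
  by_cases ht : t ∈ univ.image a
  · refine eq_zero_of_sum_div_pow_eq_zero (g := fun t => ∑ p with a p = t, c p) hd hS
      (fun z hz => ?_) t ht
    obtain ⟨hne, hsum⟩ := h z hz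
    refine ⟨forall_mem_image.2 fun p _ => hne p, ?_⟩
    rw [← hsum, ← sum_fiberwise_of_maps_to fun p _ => mem_image_of_mem a (mem_univ p)]
    refine sum_congr rfl fun u _ => ?_
    rw [sum_div]
    exact sum_congr rfl fun p hp => by rw [(mem_filter.1 hp).2]
  · rw [filter_eq_empty_iff.2 fun p _ hp => ht (mem_image.2 ⟨p, mem_univ p, hp⟩), sum_empty]

end PartialFractions

theorem Complex.eq_of_add_conj_eq_of_re_le {z w u : ℂ} (h : z + conj w = u + conj u)
    (hz : z.re ≤ u.re) (hw : w.re ≤ u.re) : z = w := by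
  have hre := congrArg re h
  have him := congrArg im h
  simp only [add_re, add_im, conj_re, conj_im] at hre him
  apply Complex.ext <;> linarith

theorem eq_zero_of_sum_fiber_mul_conj_eq_zero {ι : Type*} [Fintype ι] {lam μ : ι → ℂ}
    (hμ : Function.Injective μ)
    (h : ∀ t, ∑ p : ι × ι with μ p.1 + conj (μ p.2) = t, lam p.1 * conj (lam p.2) = 0) :
    lam = 0 := by
  classical
  by_contra hlam
  obtain ⟨j₀, hj₀, hmax⟩ := exists_max_image {j | lam j ≠ 0} (fun j => (μ j).re) <| by
    obtain ⟨j, hj⟩ := Function.ne_iff.1 hlam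
    exact ⟨j, by simpa using hj⟩
  set t := μ j₀ + conj (μ j₀)
  -- On the fiber over `t` only diagonal terms `|lam j|²` survive, by maximality of `(μ j₀).re`.
  have hnonneg : ∀ p ∈ univ.filter fun p : ι × ι => μ p.1 + conj (μ p.2) = t,
      0 ≤ (lam p.1 * conj (lam p.2)).re := by
    rintro ⟨i, j⟩ hp
    by_cases hi : lam i = 0
    · simp [hi]
    by_cases hj : lam j = 0
    · simp [hj]
    obtain rfl : i = j := hμ <| Complex.eq_of_add_conj_eq_of_re_le (mem_filter.1 hp).2
      (hmax i (by simpa using hi)) (hmax j (by simpa using hj))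
    rw [Complex.mul_conj, Complex.ofReal_re]
    exact Complex.normSq_nonneg _
  have hle := single_le_sum hnonneg (a := (j₀, j₀)) (by simp [t])
  rw [← Complex.re_sum, h t, Complex.zero_re, Complex.mul_conj, Complex.ofReal_re] at hle
  exact (mem_filter.1 hj₀).2 (Complex.normSq_eq_zero.1 (le_antisymm hle (Complex.normSq_nonneg _)))

/-- If for all `M > 0` the double sum
`Σ_{j,j'} λ_j conj(λ_{j'}) / (Mα + μ_j + conj(μ_{j'}))^d` vanishes (the denominators
being nonzero), with the `μ_j` pairwise distinct, then all `λ_j` vanish. -/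
theorem vanishing_quadratic_sum
    (ι : Type*) [Fintype ι] (α : ℝ) (hα : 0 < α) (d : ℕ) (hd : 1 ≤ d)
    (lam μ : ι → ℂ) (hμ : Function.Injective μ)
    (h : ∀ M : ℝ, 0 < M →
      (∀ j j' : ι, ((M * α : ℝ) : ℂ) + μ j + (starRingEnd ℂ) (μ j') ≠ 0) ∧
      ∑ j : ι, ∑ j' : ι,
        lam j * (starRingEnd ℂ) (lam j')
          / (((M * α : ℝ) : ℂ) + μ j + (starRingEnd ℂ) (μ j')) ^ d = 0) :
    ∀ j : ι, lam j = 0 := by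
  have hS : ((fun M : ℝ => ((M * α : ℝ) : ℂ)) '' Set.Ioi 0).Infinite :=
    (Set.Ioi_infinite 0).image fun x _ y _ hxy =>
      mul_right_cancel₀ hα.ne' (Complex.ofReal_injective hxy)
  have hfiber := sum_fiber_eq_zero_of_sum_div_pow_eq_zero
    (c := fun p : ι × ι => lam p.1 * (starRingEnd ℂ) (lam p.2))
    (a := fun p => μ p.1 + (starRingEnd ℂ) (μ p.2)) (Nat.one_le_iff_ne_zero.1 hd) hS <| by
      rintro _ ⟨M, hM, rfl⟩
      obtain ⟨hne, hsum⟩ := h M hM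
      refine ⟨fun p => by simpa only [add_assoc] using hne p.1 p.2, ?_⟩
      rw [Fintype.sum_prod_type]
      simpa only [add_assoc] using hsum
  exact congrFun (eq_zero_of_sum_fiber_mul_conj_eq_zero hμ hfiber)
end

section
/- Let Q be a finite set of positive integers such that for any n, m ∈ Q there exist positive integers α, β with n^α = m^β. Then there exists a positive integer q such that every n ∈ Q is a power of q, i.e., for every n ∈ Q there exists a positive integer α with n = q^α. -/
/-!
Fix `n₀ ∈ Q` with `n₀ ≥ 2` (if there is none, every element is `1 = 1 ^ 1`) and write
`n₀ = q ^ k` with `q` not a perfect power. For `m ∈ Q`, `q ^ (k α) = m ^ β` forces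
`q = c ^ (β / g)` and `m = c ^ (k α / g)` for some `c`, where `g = gcd (k α) β`; since `q` is not
a perfect power, `β / g = 1`, so `c = q` and `m` is a power of `q`.
-/

namespace Nat

/-- `q` is not a perfect power; taking `k = 0` and `c = 0, k = 2` rules out `q = 1` and `q = 0`. -/
def IsPrimitiveBase (q : ℕ) : Prop :=
  ∀ c k : ℕ, q = c ^ k → k = 1

namespace IsPrimitiveBase

variable {q : ℕ}

theorem two_le (hq : IsPrimitiveBase q) : 2 ≤ q := by
  by_contra! hlt
  interval_cases q
  · exact absurd (hq 0 2 rfl) (by decide)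
  · exact absurd (hq 1 0 rfl) (by decide)

theorem exists_pos_eq_pow_of_pow_eq_pow (hq : IsPrimitiveBase q) {m a b : ℕ} (ha : 0 < a)
    (h : q ^ a = m ^ b) : ∃ k, 0 < k ∧ m = q ^ k := by
  obtain ⟨c, hqc, hmc⟩ := exists_eq_pow_of_pow_eq_pow (Or.inl ha.ne') h
  have hc : c = q := by simpa [hq c _ hqc] using hqc.symm
  have hk : 0 < a / a.gcd b :=
    Nat.div_pos (Nat.le_of_dvd ha (a.gcd_dvd_left b)) (a.gcd_pos_of_pos_left b ha)
  exact ⟨_, hk, hc ▸ hmc⟩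

end IsPrimitiveBase

theorem exists_isPrimitiveBase_pow {n : ℕ} (hn : 2 ≤ n) :
    ∃ q k, IsPrimitiveBase q ∧ 0 < k ∧ n = q ^ k := by
  induction n using Nat.strong_induction_on with
  | _ n ih =>
    by_cases hprim : IsPrimitiveBase n
    · exact ⟨n, 1, hprim, one_pos, (pow_one n).symm⟩
    obtain ⟨c, e, hnc, he⟩ : ∃ c e, n = c ^ e ∧ e ≠ 1 := by
      simpa [IsPrimitiveBase] using hprim
    have hc : 2 ≤ c := by
      rcases c with _ | _ | c <;> rcases e with _ | _ | e <;> simp_all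
    have he : 2 ≤ e := by
      rcases e with _ | _ | e <;> simp_all
    obtain ⟨q, k, hq, hk, rfl⟩ := ih c (hnc ▸ lt_self_pow₀ hc he) hc
    exact ⟨q, k * e, hq, by positivity, by rw [hnc, pow_mul]⟩

end Nat

/-- If `Q` is a finite set of positive integers such that any two elements have a
common power (`n^α = m^β`), then all elements of `Q` are powers of a single
positive integer `q`. -/
theorem common_power_of_pairwise_power
    (Q : Finset ℕ) (hpos : ∀ n ∈ Q, 0 < n)
    (h : ∀ n ∈ Q, ∀ m ∈ Q, ∃ α β : ℕ, 0 < α ∧ 0 < β ∧ n ^ α = m ^ β) :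
    ∃ q : ℕ, 0 < q ∧ ∀ n ∈ Q, ∃ α : ℕ, 0 < α ∧ n = q ^ α := by
  by_cases hone : ∀ n ∈ Q, n = 1
  · exact ⟨1, one_pos, fun n hn => ⟨1, one_pos, by simp [hone n hn]⟩⟩
  push Not at hone
  obtain ⟨n₀, hn₀, hn₀_ne⟩ := hone
  obtain ⟨q, k, hq, hk, rfl⟩ :=
    Nat.exists_isPrimitiveBase_pow (n := n₀) (by have := hpos _ hn₀; omega)
  refine ⟨q, by have := hq.two_le; omega, fun m hm => ?_⟩
  obtain ⟨α, β, hα, -, hpow⟩ := h _ hn₀ m hm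
  rw [← pow_mul] at hpow
  exact hq.exists_pos_eq_pow_of_pow_eq_pow (mul_pos hk hα) hpow
end

section
/- Let d ≥ 1 and let w_k be a sequence of complex numbers with Re(w_k) > 0 and Re(w_k) → 0. Then the normalized partial reproducing kernels k_{d,w_k} = K_{d,w_k}/‖K_{d,w_k}‖ converge weakly to 0 in the Hardy space H of Dirichlet series with square-summable coefficients. -/
open scoped ComplexConjugate
open Filter

/-- Coefficients of the partial reproducing kernel of order `d` at `w`. -/
noncomputable def partialKernelCoef (d : ℕ) (w : ℂ) (n : ℕ) : ℂ :=
  if n ≠ 0 ∧ ∀ p ∈ n.primeFactors, p ≤ Nat.nth Nat.Prime (d - 1) then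
    (n : ℂ) ^ (-(conj w)) else 0

/-- The norm of the partial reproducing kernel `K_{d,w}`. -/
noncomputable def partialKernelNorm (d : ℕ) (w : ℂ) : ℝ :=
  Real.sqrt (∏ j ∈ Finset.range d, (1 - (Nat.nth Nat.Prime j : ℝ) ^ (-(2 * w.re)))⁻¹)

/-!
The squared moduli of the coefficients of `K_{d,w}` are `n ^ (-2 Re w)` on the `p_d`-smooth
numbers, so the Euler product identifies `‖K_{d,w}‖²` with `∏_{j<d} (1 - p_j ^ (-2 Re w))⁻¹`.
Its factor at `p = 2` blows up as `Re w → 0`, so `‖K_{d,w_k}‖ → ∞`. Since every coefficient of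
`K_{d,w}` has modulus at most `1`, each coordinate of the unit vector `k_{d,w_k}` is at most
`‖K_{d,w_k}‖⁻¹ → 0`, and a bounded sequence in `ℓ²` with vanishing coordinates is weakly null:
split `⟨f, k⟩` into finitely many coordinates and an `ℓ²`-small tail of `f` (Cauchy–Schwarz).
-/

open Topology

theorem summable_mul_and_tsum_mul_le_sqrt_mul_sqrt {ι : Type*} {f g : ι → ℝ}
    (hf : ∀ i, 0 ≤ f i) (hg : ∀ i, 0 ≤ g i)
    (hf2 : Summable fun i => f i ^ 2) (hg2 : Summable fun i => g i ^ 2) :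
    Summable (fun i => f i * g i) ∧ ∑' i, f i * g i ≤ √(∑' i, f i ^ 2) * √(∑' i, g i ^ 2) := by
  have := Real.summable_and_inner_le_Lp_mul_Lq_tsum_of_nonneg Real.HolderConjugate.two_two hf hg
    (by simpa [Real.rpow_two] using hf2) (by simpa [Real.rpow_two] using hg2)
  simpa [Real.rpow_two, Real.sqrt_eq_rpow] using this

section SquareSummable

variable {ι 𝕜 : Type*} [RCLike 𝕜] {a u : ι → 𝕜}

theorem summable_mul_conj_of_summable_sq (ha : Summable fun i => ‖a i‖ ^ 2)
    (hu : Summable fun i => ‖u i‖ ^ 2) : Summable fun i => a i * conj (u i) :=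
  .of_norm <| by
    simpa only [norm_mul, RCLike.norm_conj] using
      (summable_mul_and_tsum_mul_le_sqrt_mul_sqrt (fun _ => norm_nonneg _)
        (fun _ => norm_nonneg _) ha hu).1

theorem norm_tsum_mul_conj_le (ha : Summable fun i => ‖a i‖ ^ 2)
    (hu : Summable fun i => ‖u i‖ ^ 2) :
    ‖∑' i, a i * conj (u i)‖ ≤ √(∑' i, ‖a i‖ ^ 2) * √(∑' i, ‖u i‖ ^ 2) := by
  obtain ⟨hsum, hle⟩ := summable_mul_and_tsum_mul_le_sqrt_mul_sqrt (fun _ => norm_nonneg _)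
    (fun _ => norm_nonneg _) ha hu
  calc ‖∑' i, a i * conj (u i)‖ ≤ ∑' i, ‖a i * conj (u i)‖ :=
        norm_tsum_le_tsum_norm (by simpa only [norm_mul, RCLike.norm_conj] using hsum)
    _ = ∑' i, ‖a i‖ * ‖u i‖ := by simp only [norm_mul, RCLike.norm_conj]
    _ ≤ _ := hle

end SquareSummable

section WeaklyNull

variable {𝕜 : Type*} [RCLike 𝕜] {a : ℕ → 𝕜}

theorem norm_tsum_mul_conj_le_head_add_tail {u : ℕ → 𝕜} (ha : Summable fun n => ‖a n‖ ^ 2)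
    (hu : Summable fun n => ‖u n‖ ^ 2) (M : ℕ) :
    ‖∑' n, a n * conj (u n)‖ ≤ ‖∑ n ∈ Finset.range M, a n * conj (u n)‖
      + √(∑' n, ‖a (n + M)‖ ^ 2) * √(∑' n, ‖u n‖ ^ 2) := by
  have htail_u : ∑' n, ‖u (n + M)‖ ^ 2 ≤ ∑' n, ‖u n‖ ^ 2 := by
    rw [← hu.sum_add_tsum_nat_add M]
    exact le_add_of_nonneg_left (Finset.sum_nonneg fun _ _ => sq_nonneg _)
  rw [← (summable_mul_conj_of_summable_sq ha hu).sum_add_tsum_nat_add M]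
  refine (norm_add_le _ _).trans ?_
  gcongr
  calc ‖∑' n, a (n + M) * conj (u (n + M))‖
      ≤ √(∑' n, ‖a (n + M)‖ ^ 2) * √(∑' n, ‖u (n + M)‖ ^ 2) :=
        norm_tsum_mul_conj_le ((summable_nat_add_iff (f := fun n => ‖a n‖ ^ 2) M).2 ha)
          ((summable_nat_add_iff (f := fun n => ‖u n‖ ^ 2) M).2 hu)
    _ ≤ _ := by gcongr

theorem tendsto_tsum_mul_conj_zero {ι : Type*} {l : Filter ι} (ha : Summable fun n => ‖a n‖ ^ 2)
    {u : ι → ℕ → 𝕜} {C : ℝ} (hu : ∀ i, Summable fun n => ‖u i n‖ ^ 2)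
    (hC : ∀ i, ∑' n, ‖u i n‖ ^ 2 ≤ C) (hcoord : ∀ n, Tendsto (fun i => u i n) l (𝓝 0)) :
    Tendsto (fun i => ∑' n, a n * conj (u i n)) l (𝓝 0) := by
  rw [NormedAddGroup.tendsto_nhds_zero]
  intro ε hε
  have htail : Tendsto (fun M => √(∑' n, ‖a (n + M)‖ ^ 2) * √C) atTop (𝓝 0) := by
    simpa using ((tendsto_sum_nat_add fun n => ‖a n‖ ^ 2).sqrt).mul_const √C
  obtain ⟨M, hM⟩ := (htail.eventually (gt_mem_nhds (half_pos hε))).exists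
  have hhead : Tendsto (fun i => ∑ n ∈ Finset.range M, a n * conj (u i n)) l (𝓝 0) := by
    simpa using tendsto_finsetSum (Finset.range M) fun n _ => ((hcoord n).star).const_mul (a n)
  filter_upwards [NormedAddGroup.tendsto_nhds_zero.1 hhead _ (half_pos hε)] with i hi
  calc ‖∑' n, a n * conj (u i n)‖
      ≤ ‖∑ n ∈ Finset.range M, a n * conj (u i n)‖
        + √(∑' n, ‖a (n + M)‖ ^ 2) * √(∑' n, ‖u i n‖ ^ 2) :=
        norm_tsum_mul_conj_le_head_add_tail ha (hu i) M
    _ ≤ ‖∑ n ∈ Finset.range M, a n * conj (u i n)‖ + √(∑' n, ‖a (n + M)‖ ^ 2) * √C := by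
        gcongr; exact hC i
    _ < ε / 2 + ε / 2 := add_lt_add hi hM
    _ = ε := add_halves ε

end WeaklyNull

lemma Nat.primesBelow_nth_prime_succ {d : ℕ} (hd : 0 < d) :
    (Nat.nth Nat.Prime (d - 1) + 1).primesBelow = (Finset.range d).image (Nat.nth Nat.Prime) := by
  ext q
  simp only [Nat.mem_primesBelow, Finset.mem_image, Finset.mem_range, Nat.lt_succ_iff]
  constructor
  · rintro ⟨hle, hq⟩
    refine ⟨Nat.count Nat.Prime q, ?_, Nat.nth_count hq⟩
    rw [← Nat.nth_count hq, Nat.nth_le_nth Nat.infinite_setOfPred_prime] at hle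
    omega
  · rintro ⟨j, hj, rfl⟩
    exact ⟨(Nat.nth_le_nth Nat.infinite_setOfPred_prime).2 (by omega), Nat.prime_nth_prime j⟩

@[simps]
noncomputable def natRpowHom (s : ℝ) : ℕ →* ℝ where
  toFun n := (n : ℝ) ^ s
  map_one' := by simp
  map_mul' m n := by
    push_cast
    exact Real.mul_rpow m.cast_nonneg n.cast_nonneg

lemma one_le_inv_one_sub_rpow_neg {x s : ℝ} (hx : 1 < x) (hs : 0 < s) :
    1 ≤ (1 - x ^ (-s))⁻¹ := by
  have h0 : 0 < x ^ (-s) := Real.rpow_pos_of_pos (by linarith) _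
  have h1 : x ^ (-s) < 1 := Real.rpow_lt_one_of_one_lt_of_neg hx (neg_neg_of_pos hs)
  rw [one_le_inv₀ (by linarith)]
  linarith

lemma one_le_inv_one_sub_nth_prime_rpow (j : ℕ) {w : ℂ} (hw : 0 < w.re) :
    1 ≤ (1 - (Nat.nth Nat.Prime j : ℝ) ^ (-(2 * w.re)))⁻¹ :=
  one_le_inv_one_sub_rpow_neg (by exact_mod_cast (Nat.prime_nth_prime j).one_lt) (by positivity)

lemma partialKernelNorm_nonneg (d : ℕ) (w : ℂ) : 0 ≤ partialKernelNorm d w :=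
  Real.sqrt_nonneg _

lemma one_le_partialKernelNorm (d : ℕ) {w : ℂ} (hw : 0 < w.re) : 1 ≤ partialKernelNorm d w :=
  Real.one_le_sqrt.2 <| Finset.one_le_prod fun j _ => one_le_inv_one_sub_nth_prime_rpow j hw

lemma partialKernelNorm_sq (d : ℕ) {w : ℂ} (hw : 0 < w.re) :
    partialKernelNorm d w ^ 2 =
      ∏ j ∈ Finset.range d, (1 - (Nat.nth Nat.Prime j : ℝ) ^ (-(2 * w.re)))⁻¹ :=
  Real.sq_sqrt <| Finset.prod_nonneg fun j _ =>
    zero_le_one.trans (one_le_inv_one_sub_nth_prime_rpow j hw)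

lemma norm_partialKernelCoef_sq (d : ℕ) (w : ℂ) (n : ℕ) :
    ‖partialKernelCoef d w n‖ ^ 2 =
      (Nat.nth Nat.Prime (d - 1) + 1).smoothNumbers.indicator
        (fun n : ℕ => (n : ℝ) ^ (-(2 * w.re))) n := by
  have hmem : (n ≠ 0 ∧ ∀ p ∈ n.primeFactors, p ≤ Nat.nth Nat.Prime (d - 1)) ↔
      n ∈ (Nat.nth Nat.Prime (d - 1) + 1).smoothNumbers := by
    simp only [Nat.mem_smoothNumbers_iff_primeFactors_subset, Finset.subset_iff,
      Nat.mem_primesBelow, Nat.lt_succ_iff]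
    exact and_congr_right fun _ =>
      ⟨fun h p hp => ⟨h p hp, Nat.prime_of_mem_primeFactors hp⟩, fun h p hp => (h hp).1⟩
  unfold partialKernelCoef
  split_ifs with h
  · rw [Set.indicator_of_mem (hmem.1 h), Complex.norm_natCast_cpow_of_pos (Nat.pos_of_ne_zero h.1),
      ← Real.rpow_natCast, ← Real.rpow_mul (Nat.cast_nonneg n)]
    simp [mul_comm]
  · simp [Set.indicator_of_notMem (mt hmem.2 h)]

lemma norm_partialKernelCoef_le_one (d : ℕ) {w : ℂ} (hw : 0 < w.re) (n : ℕ) :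
    ‖partialKernelCoef d w n‖ ≤ 1 := by
  unfold partialKernelCoef
  split_ifs with h
  · rw [Complex.norm_natCast_cpow_of_pos (Nat.pos_of_ne_zero h.1)]
    refine Real.rpow_le_one_of_one_le_of_nonpos (by exact_mod_cast Nat.one_le_iff_ne_zero.2 h.1) ?_
    simpa using hw.le
  · simp

lemma hasSum_norm_partialKernelCoef_sq {d : ℕ} (hd : 0 < d) {w : ℂ} (hw : 0 < w.re) :
    HasSum (fun n => ‖partialKernelCoef d w n‖ ^ 2) (partialKernelNorm d w ^ 2) := by
  have hlt : ∀ {p : ℕ}, p.Prime → ‖natRpowHom (-(2 * w.re)) p‖ < 1 := fun hp => by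
    rw [natRpowHom_apply, Real.norm_of_nonneg (Real.rpow_nonneg (Nat.cast_nonneg _) _)]
    exact Real.rpow_lt_one_of_one_lt_of_neg (by exact_mod_cast hp.one_lt) (by linarith)
  have h := (EulerProduct.summable_and_hasSum_smoothNumbers_prod_primesBelow_geometric hlt
    (Nat.nth Nat.Prime (d - 1) + 1)).2
  rw [Nat.primesBelow_nth_prime_succ hd,
    Finset.prod_image fun i _ j _ h => Nat.nth_injective Nat.infinite_setOfPred_prime h] at h
  simp_rw [norm_partialKernelCoef_sq, partialKernelNorm_sq d hw]
  exact hasSum_subtype_iff_indicator.1 h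

lemma inv_one_sub_two_rpow_le_partialKernelNorm_sq {d : ℕ} (hd : 0 < d) {w : ℂ}
    (hw : 0 < w.re) : (1 - (2 : ℝ) ^ (-(2 * w.re)))⁻¹ ≤ partialKernelNorm d w ^ 2 := by
  rw [partialKernelNorm_sq d hw]
  calc (1 - (2 : ℝ) ^ (-(2 * w.re)))⁻¹
      = ∏ j ∈ Finset.range 1, (1 - (Nat.nth Nat.Prime j : ℝ) ^ (-(2 * w.re)))⁻¹ := by
        simp [Nat.nth_prime_zero_eq_two]
    _ ≤ _ := Finset.prod_le_prod_of_subset_of_one_le (by simpa using hd)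
        (fun j _ => zero_le_one.trans (one_le_inv_one_sub_nth_prime_rpow j hw))
        (fun j _ _ => one_le_inv_one_sub_nth_prime_rpow j hw)

lemma tendsto_partialKernelNorm_atTop {d : ℕ} (hd : 0 < d) {ι : Type*} {l : Filter ι}
    {w : ι → ℂ} (hw : Tendsto (fun i => (w i).re) l (𝓝[>] 0)) :
    Tendsto (fun i => partialKernelNorm d (w i)) l atTop := by
  have hfactor : Tendsto (fun σ : ℝ => 1 - (2 : ℝ) ^ (-(2 * σ))) (𝓝[>] 0) (𝓝[>] 0) := by
    refine tendsto_nhdsWithin_iff.2 ⟨?_, eventually_nhdsWithin_of_forall fun σ hσ => ?_⟩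
    · have : Continuous fun σ : ℝ => 1 - (2 : ℝ) ^ (-(2 * σ)) := by fun_prop (disch := norm_num)
      simpa using (this.tendsto 0).mono_left nhdsWithin_le_nhds
    · have hσ : (0 : ℝ) < σ := hσ
      simpa using Real.rpow_lt_one_of_one_lt_of_neg one_lt_two (by linarith : -(2 * σ) < 0)
  have hsq : Tendsto (fun i => partialKernelNorm d (w i) ^ 2) l atTop :=
    tendsto_atTop_mono' l
      ((hw.eventually self_mem_nhdsWithin).mono fun i hi =>
        inv_one_sub_two_rpow_le_partialKernelNorm_sq hd hi)
      ((tendsto_inv_nhdsGT_zero.comp hfactor).comp hw)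
  exact (Real.tendsto_sqrt_atTop.comp hsq).congr fun i =>
    Real.sqrt_sq (partialKernelNorm_nonneg d (w i))

/-- The coefficients of the normalized kernel `k_{d,w} = K_{d,w} / ‖K_{d,w}‖`. -/
noncomputable def normalizedKernelCoef (d : ℕ) (w : ℂ) (n : ℕ) : ℂ :=
  partialKernelCoef d w n / partialKernelNorm d w

lemma hasSum_norm_normalizedKernelCoef_sq {d : ℕ} (hd : 0 < d) {w : ℂ} (hw : 0 < w.re) :
    HasSum (fun n => ‖normalizedKernelCoef d w n‖ ^ 2) 1 := by
  have hK : partialKernelNorm d w ^ 2 ≠ 0 := by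
    have := one_le_partialKernelNorm d hw
    positivity
  have h := (hasSum_norm_partialKernelCoef_sq hd hw).div_const (partialKernelNorm d w ^ 2)
  rw [div_self hK] at h
  simpa only [normalizedKernelCoef, norm_div, div_pow, Complex.norm_real,
    Real.norm_of_nonneg (partialKernelNorm_nonneg d w)] using h

lemma norm_normalizedKernelCoef_le (d : ℕ) {w : ℂ} (hw : 0 < w.re) (n : ℕ) :
    ‖normalizedKernelCoef d w n‖ ≤ (partialKernelNorm d w)⁻¹ := by
  rw [normalizedKernelCoef, norm_div, Complex.norm_real,
    Real.norm_of_nonneg (partialKernelNorm_nonneg d w), div_eq_mul_inv]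
  exact mul_le_of_le_one_left (inv_nonneg.2 (partialKernelNorm_nonneg d w))
    (norm_partialKernelCoef_le_one d hw n)

/-- If `Re w_k → 0` (with `Re w_k > 0`), then the normalized partial reproducing
kernels `K_{d,w_k}/‖K_{d,w_k}‖` converge weakly to `0` in `H`: for every
square-summable coefficient sequence `a`, the inner products tend to `0`. -/
theorem partial_kernels_weakly_null
    (d : ℕ) (hd : 1 ≤ d) (w : ℕ → ℂ) (hw : ∀ k, 0 < (w k).re)
    (hlim : Tendsto (fun k => (w k).re) atTop (nhds 0))
    (a : ℕ → ℂ) (ha : Summable fun n => ‖a n‖ ^ 2) :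
    Tendsto
      (fun k => (∑' n : ℕ, a n * conj (partialKernelCoef d (w k) n))
        / (partialKernelNorm d (w k) : ℂ))
      atTop (nhds 0) := by
  have hK : Tendsto (fun k => partialKernelNorm d (w k)) atTop atTop :=
    tendsto_partialKernelNorm_atTop hd (tendsto_nhdsWithin_iff.2 ⟨hlim, .of_forall hw⟩)
  have hnorm (k : ℕ) : HasSum (fun n => ‖normalizedKernelCoef d (w k) n‖ ^ 2) 1 :=
    hasSum_norm_normalizedKernelCoef_sq hd (hw k)
  have hcoord (n : ℕ) : Tendsto (fun k => normalizedKernelCoef d (w k) n) atTop (𝓝 0) :=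
    squeeze_zero_norm (fun k => norm_normalizedKernelCoef_le d (hw k) n) hK.inv_tendsto_atTop
  convert tendsto_tsum_mul_conj_zero ha (fun k => (hnorm k).summable)
    (fun k => (hnorm k).tsum_eq.le) hcoord using 2 with k
  simp_rw [normalizedKernelCoef, map_div₀, Complex.conj_ofReal, mul_div_assoc', tsum_div_const]
end

section
/- Let φ(s) = c_1 + c_r r^{-s} with r ≥ 2 an integer, inducing a bounded composition operator C_φ on the Hardy space H of Dirichlet series (so Re c_1 - |c_r| ≥ 1/2). Let q ≥ 2 be an integer such that r^m ≠ q^n for all positive integers n, m. Then for every w with Re w > 0, the adjoint satisfies C_φ*(K_w^{(q)}) = K_{c_1}, where K_{c_1}(s) = ζ(conj(c_1) + s) is the reproducing kernel of H at c_1. -/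
/-!
The function `F z = ∑ aₙ n ^ (-(c₁ + c_r z))` is analytic near `0`, so for large real `s` the
Dirichlet series of `f ∘ φ` equals `F (r ^ (-s)) = ∑ₖ Fₖ (r ^ k) ^ (-s)`. By uniqueness of
Dirichlet coefficients, `f ∘ φ` has coefficients only at the powers of `r`, with constant term
`F 0 = f(c₁)`. No `q ^ m` with `m ≥ 1` is a power of `r`, so pairing with `K_w^{(q)}` sees only
that constant term.
-/

open Filter Topology LSeries
open scoped ComplexConjugate

namespace LSeries

lemma tsum_mul_cpow_neg_eq {f : ℕ → ℂ} (hf : f 0 = 0) (s : ℂ) :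
    ∑' n : ℕ, f n * (n : ℂ) ^ (-s) = LSeries f s := by
  simp only [LSeries, term_def₀ hf]

lemma LSeriesSummable_of_summable_norm_mul_rpow {f : ℕ → ℂ} {s : ℂ}
    (h : Summable fun n : ℕ => ‖f n‖ * (n : ℝ) ^ (-s.re)) : LSeriesSummable f s := by
  refine Summable.of_norm_bounded h fun n => ?_
  rcases eq_or_ne n 0 with rfl | hn
  · simp only [term_zero, norm_zero]
    positivity
  · rw [norm_term_eq, if_neg hn, Real.rpow_neg n.cast_nonneg, div_eq_mul_inv]

lemma summable_norm_mul_rpow_of_summable_sq {f : ℕ → ℂ} (hf : Summable fun n => ‖f n‖ ^ 2)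
    {σ : ℝ} (hσ : 1 / 2 < σ) : Summable fun n : ℕ => ‖f n‖ * (n : ℝ) ^ (-σ) := by
  have hsq : Summable fun n : ℕ => ((n : ℝ) ^ (-σ)) ^ 2 := by
    simp_rw [← Real.rpow_natCast, ← Real.rpow_mul (Nat.cast_nonneg _)]
    exact Real.summable_nat_rpow.mpr (by push_cast; linarith)
  refine Summable.of_nonneg_of_le (fun n => by positivity) (fun n => ?_)
    ((hf.add hsq).div_const 2)
  linarith [two_mul_le_add_sq ‖f n‖ ((n : ℝ) ^ (-σ))]

lemma abscissaOfAbsConv_le_of_summable_sq {f : ℕ → ℂ} (hf : Summable fun n => ‖f n‖ ^ 2) :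
    abscissaOfAbsConv f ≤ (1 / 2 : ℝ) :=
  abscissaOfAbsConv_le_of_forall_lt_LSeriesSummable fun σ hσ =>
    LSeriesSummable_of_summable_norm_mul_rpow <| by
      simpa using summable_norm_mul_rpow_of_summable_sq hf hσ

end LSeries

/-- The coefficients of the Dirichlet series `∑ₖ t k (r ^ k) ^ (-s)`. -/
noncomputable def powCoeffs (r : ℕ) (t : ℕ → ℂ) (n : ℕ) : ℂ :=
  if r ^ Nat.log r n = n then t (Nat.log r n) else 0

section powCoeffs

variable {r : ℕ} {t : ℕ → ℂ}

lemma powCoeffs_pow (hr : 1 < r) (k : ℕ) : powCoeffs r t (r ^ k) = t k := by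
  simp [powCoeffs, Nat.log_pow hr]

lemma powCoeffs_eq_zero {n : ℕ} (hn : n ∉ Set.range (r ^ ·)) : powCoeffs r t n = 0 :=
  if_neg fun h => hn ⟨_, h⟩

lemma term_powCoeffs_pow (hr : 1 < r) (s : ℂ) (k : ℕ) :
    term (powCoeffs r t) s (r ^ k) = t k * ((r : ℂ) ^ (-s)) ^ k := by
  rw [term_of_ne_zero (pow_pos (by omega) k).ne', powCoeffs_pow hr, Nat.cast_pow,
    ← Complex.natCast_cpow_natCast_mul, Complex.cpow_nat_mul, Complex.cpow_neg, inv_pow,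
    div_eq_mul_inv]

lemma LSeriesHasSum_powCoeffs (hr : 1 < r) {s L : ℂ}
    (h : HasSum (fun k => t k * ((r : ℂ) ^ (-s)) ^ k) L) :
    LSeriesHasSum (powCoeffs r t) s L := by
  refine ((Nat.pow_right_injective hr).hasSum_iff fun n hn => ?_).mp ?_
  · rw [term_def, powCoeffs_eq_zero hn, zero_div, ite_self]
  · simpa only [Function.comp_def, term_powCoeffs_pow hr] using h

end powCoeffs

lemma tendsto_natCast_cpow_neg_atTop {r : ℕ} (hr : 1 < r) :
    Tendsto (fun x : ℝ => (r : ℂ) ^ (-(x : ℂ))) atTop (𝓝 0) := by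
  refine tendsto_zero_iff_norm_tendsto_zero.mpr ?_
  simp only [Complex.norm_natCast_cpow_of_pos (by omega : 0 < r), Complex.neg_re,
    Complex.ofReal_re]
  exact (tendsto_rpow_atBot_of_base_gt_one _ (by exact_mod_cast hr)).comp tendsto_neg_atTop_atBot

theorem LSeries.eq_powCoeffs_of_eventually_eq {r : ℕ} (hr : 1 < r) {b : ℕ → ℂ}
    (hb : abscissaOfAbsConv b < ⊤) {F : ℂ → ℂ} {p : FormalMultilinearSeries ℂ ℂ ℂ}
    (hF : HasFPowerSeriesAt F p 0)
    (h : ∀ᶠ x : ℝ in atTop, LSeries b x = F ((r : ℂ) ^ (-(x : ℂ)))) {n : ℕ} (hn : n ≠ 0) :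
    b n = powCoeffs r p.coeff n := by
  have hsum : ∀ᶠ x : ℝ in atTop,
      LSeriesHasSum (powCoeffs r p.coeff) x (F ((r : ℂ) ^ (-(x : ℂ)))) := by
    filter_upwards [(tendsto_natCast_cpow_neg_atTop hr).eventually hF.eventually_hasSum]
      with x hx
    refine LSeriesHasSum_powCoeffs hr ?_
    simpa [FormalMultilinearSeries.apply_eq_pow_smul_coeff, mul_comm] using hx
  obtain ⟨x, hx⟩ := hsum.exists
  refine eq_of_LSeries_eventually_eq hb
    (hx.LSeriesSummable.abscissaOfAbsConv_le.trans_lt (EReal.coe_lt_top _)) ?_ hn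
  filter_upwards [h, hsum] with x hbx hx
  rw [hbx, hx.LSeries_eq]

lemma conj_natCast_cpow_conj (n : ℕ) (s : ℂ) : conj ((n : ℂ) ^ conj s) = (n : ℂ) ^ s := by
  rw [Complex.cpow_conj _ _ (by simp [Complex.natCast_arg, Real.pi_ne_zero.symm]),
    Complex.conj_natCast, Complex.conj_conj]

theorem adjoint_geometric_kernel_independent_general
    (r : ℕ) (hr : 2 ≤ r) (q : ℕ) (hq : 2 ≤ q)
    (hpow : ∀ m n : ℕ, 0 < m → 0 < n → r ^ m ≠ q ^ n)
    (c₁ cr : ℂ) (hGH : 1 / 2 ≤ c₁.re - ‖cr‖)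
    (w : ℂ)
    (a : ℕ → ℂ) (ha0 : a 0 = 0) (ha : Summable fun n => ‖a n‖ ^ 2)
    (b : ℕ → ℂ) (hb0 : b 0 = 0)
    (σ₀ : ℝ)
    (hbconv : ∀ s : ℂ, σ₀ < s.re → Summable fun n : ℕ => ‖b n‖ * (n : ℝ) ^ (-s.re))
    (hcomp : ∀ s : ℂ, σ₀ < s.re →
      ∑' n : ℕ, b n * (n : ℂ) ^ (-s)
        = ∑' n : ℕ, a n * (n : ℂ) ^ (-(c₁ + cr * (r : ℂ) ^ (-s)))) :
    ∑' m : ℕ, b (q ^ m) * conj ((q : ℂ) ^ (-(m : ℂ) * conj w))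
      = ∑' n : ℕ, a n * conj ((n : ℂ) ^ (-(conj c₁))) := by
  have hF : AnalyticAt ℂ (fun z => LSeries a (c₁ + cr * z)) 0 := by
    rcases eq_or_ne cr 0 with rfl | hcr
    -- `c₁` may then lie on the boundary of the half-plane of absolute convergence
    · simpa using analyticAt_const
    refine (LSeries_analyticOnNhd a c₁ ?_).comp_of_eq (by fun_prop) (by simp)
    have : (1 / 2 : ℝ) < c₁.re := by linarith [norm_pos_iff.mpr hcr]
    exact (abscissaOfAbsConv_le_of_summable_sq ha).trans_lt (mod_cast this)
  obtain ⟨p, hp⟩ := hF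
  have hb : abscissaOfAbsConv b < ⊤ :=
    (LSeriesSummable_of_summable_norm_mul_rpow (hbconv (σ₀ + 1) (by simp))
      |>.abscissaOfAbsConv_le).trans_lt (EReal.coe_lt_top _)
  have hLb : ∀ᶠ x : ℝ in atTop, LSeries b x = LSeries a (c₁ + cr * (r : ℂ) ^ (-(x : ℂ))) := by
    filter_upwards [eventually_gt_atTop σ₀] with x hx
    rw [← tsum_mul_cpow_neg_eq hb0, ← tsum_mul_cpow_neg_eq ha0, hcomp x (by simpa)]
  have hcoeff (n : ℕ) (hn : n ≠ 0) := eq_powCoeffs_of_eventually_eq hr hb hp hLb hn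
  have hb1 : b 1 = LSeries a c₁ := by
    rw [hcoeff 1 one_ne_zero, ← pow_zero r, powCoeffs_pow hr, FormalMultilinearSeries.coeff,
      hp.coeff_zero]
    simp
  have hbq (m : ℕ) (hm : m ≠ 0) : b (q ^ m) = 0 := by
    rw [hcoeff _ (pow_pos (by omega) m).ne']
    refine powCoeffs_eq_zero fun ⟨k, hk⟩ => ?_
    rcases Nat.eq_zero_or_pos k with rfl | hk0
    · exact (Nat.one_lt_pow hm (a := q) (by omega)).ne (by simpa using hk)
    · exact hpow k m hk0 (Nat.pos_of_ne_zero hm) hk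
  rw [tsum_eq_single 0 fun m hm => by rw [hbq m hm, zero_mul]]
  simp_rw [← map_neg, conj_natCast_cpow_conj]
  simp [hb1, tsum_mul_cpow_neg_eq ha0]

/-- Adjoint action on geometric kernels for multiplicatively independent bases:
if `φ(s) = c₁ + c_r r^{-s}` induces a bounded composition operator on `H`
(`Re c₁ - |c_r| ≥ 1/2`) and `r^m ≠ q^n` for all positive `m, n`, then
`C_φ*(K_w^{(q)}) = K_{c₁}`, i.e. `⟨C_φ f, K_w^{(q)}⟩ = ⟨f, K_{c₁}⟩` for every
`f = Σ a_n n^{-s}` in `H`, where `b` denotes the coefficient sequence of `f ∘ φ`. -/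
theorem adjoint_geometric_kernel_independent
    (r : ℕ) (hr : 2 ≤ r) (q : ℕ) (hq : 2 ≤ q)
    (hpow : ∀ m n : ℕ, 0 < m → 0 < n → r ^ m ≠ q ^ n)
    (c₁ cr : ℂ) (hGH : 1 / 2 ≤ c₁.re - ‖cr‖)
    (w : ℂ) (hw : 0 < w.re)
    (a : ℕ → ℂ) (ha0 : a 0 = 0) (ha : Summable fun n => ‖a n‖ ^ 2)
    (b : ℕ → ℂ) (hb0 : b 0 = 0) (hb : Summable fun n => ‖b n‖ ^ 2)
    (σ₀ : ℝ)
    (hbconv : ∀ s : ℂ, σ₀ < s.re → Summable fun n : ℕ => ‖b n‖ * (n : ℝ) ^ (-s.re))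
    (hcomp : ∀ s : ℂ, σ₀ < s.re →
      ∑' n : ℕ, b n * (n : ℂ) ^ (-s)
        = ∑' n : ℕ, a n * (n : ℂ) ^ (-(c₁ + cr * (r : ℂ) ^ (-s)))) :
    ∑' m : ℕ, b (q ^ m) * conj ((q : ℂ) ^ (-(m : ℂ) * conj w))
      = ∑' n : ℕ, a n * conj ((n : ℂ) ^ (-(conj c₁))) :=
  adjoint_geometric_kernel_independent_general r hr q hq hpow c₁ cr hGH w a ha0 ha b hb0 σ₀ hbconv
    hcomp
end

section
/- Let φ_0(s) = s and suppose φ_1 ∈ 𝒢 is a symbol such that, for every finite set Q of primes and every α ∈ ℝ, the Q-projection φ_{1,Q} admits a finite angular derivative at iα with φ_{1,Q}(iα) = iα. Then φ_1(s) = s. -/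
open Filter Topology Complex ComplexConjugate

/-!
On the projection to the empty set of primes the symbol is the affine map `c₀ s + c₁`, and
its boundary values `iα` force `c₀ = 1` and `c₁ = 0`. By the Gordon–Hedenmalm condition,
`ψ = Σ_{n ≥ 2} c_n n^{-s}` is then either identically `0`, so that all `c_n` vanish by uniqueness
of Dirichlet series, or it has positive real part on the right half-plane. In the second case the
Harnack inequality `‖ψ 1‖ ≤ σ ‖ψ σ‖`, obtained from the Schwarz lemma through Cayley transforms,
is incompatible with the decay `ψ σ = O(2^{-σ})` as `σ → ∞`.
-/

lemma add_conj_ne_zero_of_re_pos {w b : ℂ} (hw : 0 < w.re) (hb : 0 < b.re) :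
    w + conj b ≠ 0 := fun h => by
  have := congrArg re h
  simp only [add_re, conj_re, zero_re] at this
  linarith

lemma norm_sub_div_add_conj_lt_one {w b : ℂ} (hw : 0 < w.re) (hb : 0 < b.re) :
    ‖(w - b) / (w + conj b)‖ < 1 := by
  rw [norm_div, div_lt_one (norm_pos_iff.2 (add_conj_ne_zero_of_re_pos hw hb)),
    ← sq_lt_sq₀ (norm_nonneg _) (norm_nonneg _),
    ← normSq_eq_norm_sq, ← normSq_eq_norm_sq, normSq_apply, normSq_apply]
  simp only [sub_re, sub_im, add_re, add_im, conj_re, conj_im]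
  nlinarith [mul_pos hw hb]

lemma re_one_add_div_one_sub_pos {z : ℂ} (hz : ‖z‖ < 1) : 0 < ((1 + z) / (1 - z)).re := by
  have hden : 1 - z ≠ 0 := fun h => by simp [← sub_eq_zero.1 h] at hz
  have hnum : (1 + z).re * (1 - z).re + (1 + z).im * (1 - z).im = 1 - normSq z := by
    simp only [add_re, sub_re, add_im, sub_im, one_re, one_im, normSq_apply]
    ring
  rw [div_re, ← add_div, hnum]
  refine div_pos ?_ (normSq_pos.2 hden)
  rw [normSq_eq_norm_sq]
  nlinarith [norm_nonneg z]

section RightHalfPlane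

variable {f : ℂ → ℂ}

/-- Schwarz–Pick lemma for holomorphic self-maps of the right half-plane. -/
theorem norm_sub_div_add_conj_le_of_re_pos (hf : DifferentiableOn ℂ f {s | 0 < s.re})
    (hpos : ∀ s, 0 < s.re → 0 < (f s).re) {s : ℂ} (hs : 0 < s.re) :
    ‖(f s - f 1) / (f s + conj (f 1))‖ ≤ ‖(s - 1) / (s + 1)‖ := by
  set T : ℂ → ℂ := fun z => (1 + z) / (1 - z)
  set g : ℂ → ℂ := fun z => (f (T z) - f 1) / (f (T z) + conj (f 1))
  have hT : Set.MapsTo T (Metric.ball 0 1) {s | 0 < s.re} := fun z hz =>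
    re_one_add_div_one_sub_pos (mem_ball_zero_iff.1 hz)
  have hb : 0 < (f 1).re := hpos 1 (by simp)
  have hg : DifferentiableOn ℂ g (Metric.ball 0 1) := by
    have hTd : DifferentiableOn ℂ T (Metric.ball 0 1) := by
      refine (differentiableOn_const 1 |>.add differentiableOn_id).div
        (differentiableOn_const 1 |>.sub differentiableOn_id) fun z hz h => ?_
      simp [← sub_eq_zero.1 h] at hz
    have hfT := hf.comp hTd hT
    exact (hfT.sub_const _).div (hfT.add_const _) fun z hz =>
      add_conj_ne_zero_of_re_pos (hpos _ (hT hz)) hb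
  have hg_maps : Set.MapsTo g (Metric.ball 0 1) (Metric.closedBall 0 1) := fun z hz =>
    mem_closedBall_zero_iff.2 (norm_sub_div_add_conj_lt_one (hpos _ (hT hz)) hb).le
  have hg0 : g 0 = 0 := by simp [g, T]
  have hs1 : s + 1 ≠ 0 := by simpa using add_conj_ne_zero_of_re_pos hs (b := 1) (by simp)
  have hz : ‖(s - 1) / (s + 1)‖ < 1 := by
    simpa using norm_sub_div_add_conj_lt_one hs (b := 1) (by simp)
  have hTz : T ((s - 1) / (s + 1)) = s := by
    simp only [T]
    field_simp
    ring
  simpa [g, hTz] using norm_le_norm_of_mapsTo_ball hg hg_maps hg0 hz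

theorem norm_apply_one_le_mul_norm_of_re_pos (hf : DifferentiableOn ℂ f {s | 0 < s.re})
    (hpos : ∀ s, 0 < s.re → 0 < (f s).re) {σ : ℝ} (hσ : 1 ≤ σ) :
    ‖f 1‖ ≤ σ * ‖f σ‖ := by
  have hσ₀ : 0 < (σ : ℂ).re := by rw [ofReal_re]; linarith
  have hpick := norm_sub_div_add_conj_le_of_re_pos hf hpos hσ₀
  have hr : ‖((σ : ℂ) - 1) / (σ + 1)‖ = (σ - 1) / (σ + 1) := by
    rw [← ofReal_one, ← ofReal_sub, ← ofReal_add, ← ofReal_div, norm_real, Real.norm_of_nonneg]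
    exact div_nonneg (by linarith) (by linarith)
  have hden := add_conj_ne_zero_of_re_pos (hpos _ hσ₀) (hpos 1 (by simp))
  rw [hr, norm_div, div_le_iff₀ (norm_pos_iff.2 hden)] at hpick
  have hrev : ‖f 1‖ - ‖f σ‖ ≤ ‖f σ - f 1‖ := by
    rw [norm_sub_rev]; exact norm_sub_norm_le _ _
  have htri : ‖f σ + conj (f 1)‖ ≤ ‖f σ‖ + ‖f 1‖ := (norm_add_le _ _).trans_eq (by rw [norm_conj])
  have hkey := hrev.trans (hpick.trans (mul_le_mul_of_nonneg_left htri (by positivity)))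
  rw [div_mul_eq_mul_div, le_div_iff₀ (by linarith)] at hkey
  nlinarith

end RightHalfPlane

lemma LSeriesSummable_of_summable_norm_mul_rpow {c : ℕ → ℂ} {x : ℝ}
    (h : Summable fun n : ℕ => ‖c n‖ * (n : ℝ) ^ (-x)) : LSeriesSummable c x := by
  refine .of_norm_bounded h fun n => ?_
  rw [LSeries.norm_term_eq]
  split_ifs with hn
  · positivity
  · simp [Real.rpow_neg, div_eq_mul_inv]

namespace LSeries

lemma eq_of_tendsto_sum_Icc {c : ℕ → ℂ} {s w : ℂ} (hs : LSeriesSummable c s)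
    (h : Tendsto (fun N : ℕ => ∑ n ∈ Finset.Icc 1 N, c n * (n : ℂ) ^ (-s)) atTop (𝓝 w)) :
    LSeries c s = w := by
  refine tendsto_nhds_unique (hs.hasSum.tendsto_sum_nat.comp (tendsto_add_atTop_nat 1)) ?_
  refine h.congr fun N => ?_
  rw [Function.comp_apply, Finset.range_eq_Ico, Finset.sum_eq_sum_Ico_succ_bot N.succ_pos,
    term_zero, zero_add, Nat.succ_eq_add_one, Finset.Ico_add_one_right_eq_Icc]
  refine Finset.sum_congr rfl fun n hn => ?_
  rw [term_of_ne_zero (by simp at hn; omega), cpow_neg, div_eq_mul_inv]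

lemma tendsto_mul_norm_atTop_of_apply_one_eq_zero {c : ℕ → ℂ} (hc : c 1 = 0)
    (ha : abscissaOfAbsConv c < ⊤) :
    Tendsto (fun x : ℝ => x * ‖LSeries c x‖) atTop (𝓝 0) := by
  -- `LSeries` ignores `c 0`, which `LSeries.tendsto_cpow_mul_atTop` needs to vanish.
  set F : ℕ → ℂ := fun n => if n = 0 then 0 else c n
  have hF : ∀ {n}, n ≠ 0 → F n = c n := fun hn => if_neg hn
  have h2 := LSeries.tendsto_cpow_mul_atTop (f := F) (n := 1) (fun m hm => by
    interval_cases m <;> simp [F, hc]) (abscissaOfAbsConv_congr hF ▸ ha)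
  have hexp : Tendsto (fun x : ℝ => x * (2 : ℝ) ^ (-x)) atTop (𝓝 0) := by
    refine (tendsto_rpow_mul_exp_neg_mul_atTop_nhds_zero 1 _ (Real.log_pos one_lt_two)).congr
      fun x => ?_
    rw [Real.rpow_one, Real.rpow_def_of_pos two_pos]
    ring_nf
  have := hexp.mul h2.norm
  rw [zero_mul] at this
  refine this.congr fun x => ?_
  rw [LSeries_congr hF, norm_mul, show ‖((1 : ℕ) + 1 : ℂ) ^ (x : ℂ)‖ = 2 ^ x by norm_num,
    ← mul_assoc, mul_assoc x, ← Real.rpow_add two_pos, neg_add_cancel, Real.rpow_zero, mul_one]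

theorem exists_re_nonpos_of_apply_one_eq_zero {c : ℕ → ℂ} (hc : c 1 = 0)
    (ha : abscissaOfAbsConv c < 1) : ∃ s : ℂ, 1 < s.re ∧ (LSeries c s).re ≤ 0 := by
  by_contra! hpos
  have hf : DifferentiableOn ℂ (fun s => LSeries c (s + 1)) {s | 0 < s.re} :=
    (LSeries_differentiableOn c).comp (differentiableOn_id.add_const 1) fun s hs => by
      simp only [Set.mem_ofPred_eq, add_re, one_re] at hs ⊢
      exact ha.trans_le (by exact_mod_cast (by linarith : (1 : ℝ) ≤ s.re + 1))
  have hharnack : ∀ σ : ℝ, 1 ≤ σ → ‖LSeries c 2‖ ≤ (σ + 1) * ‖LSeries c (σ + 1 : ℝ)‖ := by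
    intro σ hσ
    have := norm_apply_one_le_mul_norm_of_re_pos hf
      (fun s hs => hpos _ (by rw [add_re, one_re]; linarith)) hσ
    norm_num at this
    push_cast
    exact this.trans (mul_le_mul_of_nonneg_right (by linarith) (norm_nonneg _))
  have hlim := (tendsto_mul_norm_atTop_of_apply_one_eq_zero hc
    (ha.trans (EReal.coe_lt_top 1))).comp (tendsto_atTop_add_const_right atTop 1 tendsto_id)
  have h2 : LSeries c 2 ≠ 0 := fun h => by simpa [h] using hpos 2 (by norm_num)
  exact h2 (norm_le_zero_iff.1 (ge_of_tendsto hlim ((eventually_ge_atTop 1).mono hharnack)))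

end LSeries

theorem eq_one_and_eq_zero_of_tendsto_boundary {F : ℂ → ℂ} {a b : ℂ} {t : ℝ}
    (hF : DifferentiableOn ℂ F {s | 0 < s.re}) (hFab : ∀ s : ℂ, t < s.re → F s = a * s + b)
    (hlim : ∀ α : ℝ, Tendsto (fun σ : ℝ => F (σ + α * I)) (𝓝[>] 0) (𝓝 (α * I))) :
    a = 1 ∧ b = 0 := by
  have hopen : IsOpen {s : ℂ | 0 < s.re} := isOpen_lt continuous_const continuous_re
  have heq : Set.EqOn F (fun s => a * s + b) {s | 0 < s.re} := by
    refine (hF.analyticOnNhd hopen).eqOn_of_preconnected_of_eventuallyEq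
      ((by fun_prop : Differentiable ℂ fun s => a * s + b).differentiableOn.analyticOnNhd hopen)
      (convex_halfSpace_re_gt 0).isPreconnected (z₀ := (max t 0 + 1 : ℝ))
      (by simp only [Set.mem_ofPred_eq, ofReal_re]; positivity) ?_
    exact eventually_of_mem ((isOpen_lt continuous_const continuous_re).mem_nhds
      (by simp only [Set.mem_ofPred_eq, ofReal_re]; linarith [le_max_left t 0])) hFab
  have hboundary : ∀ α : ℝ, a * (α * I) + b = α * I := fun α => by
    have hev : (fun σ : ℝ => F (σ + α * I)) =ᶠ[𝓝[>] 0] fun σ => a * (σ + α * I) + b :=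
      eventually_nhdsWithin_of_forall fun σ (hσ : 0 < σ) => heq (by simpa using hσ)
    refine tendsto_nhds_unique (Tendsto.congr' hev.symm ?_) (hlim α)
    simpa using ((Continuous.tendsto (by fun_prop) 0).mono_left nhdsWithin_le_nhds :
      Tendsto (fun σ : ℝ => a * (σ + α * I) + b) (𝓝[>] 0) _)
  have hb : b = 0 := by simpa using hboundary 0
  refine ⟨?_, hb⟩
  simpa [hb, I_ne_zero] using hboundary 1

theorem identity_symbol_rigidity_general
    (c₀ : ℕ) (c : ℕ → ℂ) (ψ : ℂ → ℂ)
    (hψconv : ∀ ε : ℝ, 0 < ε →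
      TendstoUniformlyOn
        (fun (N : ℕ) (s : ℂ) => ∑ n ∈ Finset.Icc 1 N, c n * (n : ℂ) ^ (-s))
        ψ atTop {s : ℂ | ε ≤ s.re})
    (hGH₁ : 1 ≤ c₀ →
      (∀ s : ℂ, 0 < s.re → ψ s = c 1 ∧ 0 ≤ (c 1).re) ∨
      (∀ s : ℂ, 0 < s.re → 0 < (ψ s).re))
    (habs : ∀ s : ℂ, 1 / 2 < s.re → Summable fun n : ℕ => ‖c n‖ * (n : ℝ) ^ (-s.re))
    (Φ : Finset ℕ → ℂ → ℂ)
    (hΦdiff : ∀ Q : Finset ℕ, (∀ p ∈ Q, p.Prime) →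
      DifferentiableOn ℂ (Φ Q) {s : ℂ | 0 < s.re})
    (hΦeq : ∀ Q : Finset ℕ, (∀ p ∈ Q, p.Prime) → ∀ s : ℂ, 1 / 2 < s.re →
      Φ Q s = (c₀ : ℂ) * s + c 1
        + ∑' n : ℕ, if 2 ≤ n ∧ ∀ p ∈ n.primeFactors, p ∈ Q then c n * (n : ℂ) ^ (-s) else 0)
    (hrad : ∀ Q : Finset ℕ, (∀ p ∈ Q, p.Prime) → ∀ α : ℝ,
      Tendsto (fun σ : ℝ => Φ Q ((σ : ℂ) + (α : ℂ) * Complex.I))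
        (nhdsWithin 0 (Set.Ioi 0)) (nhds ((α : ℂ) * Complex.I))) :
    c₀ = 1 ∧ c 1 = 0 ∧ ∀ n : ℕ, 2 ≤ n → c n = 0 := by
  have hprime : ∀ p ∈ (∅ : Finset ℕ), p.Prime := by simp
  obtain ⟨hc₀, hc₁⟩ : (c₀ : ℂ) = 1 ∧ c 1 = 0 := by
    refine eq_one_and_eq_zero_of_tendsto_boundary (t := 1 / 2) (hΦdiff ∅ hprime) (fun s hs => ?_)
      (hrad ∅ hprime)
    have hnone (n : ℕ) : ¬ (2 ≤ n ∧ ∀ p ∈ n.primeFactors, p ∈ (∅ : Finset ℕ)) := fun ⟨hn, h⟩ =>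
      have ⟨p, hp⟩ := Nat.nonempty_primeFactors.2 hn
      Finset.notMem_empty p (h p hp)
    simp only [hΦeq ∅ hprime s hs, hnone, if_false, tsum_zero, add_zero]
  have hc₀ : c₀ = 1 := by exact_mod_cast hc₀
  have habsc : LSeries.abscissaOfAbsConv c ≤ (1 / 2 : ℝ) :=
    LSeries.abscissaOfAbsConv_le_of_forall_lt_LSeriesSummable fun y hy =>
      LSeriesSummable_of_summable_norm_mul_rpow (by simpa using habs y (by simpa using hy))
  have hψ : ∀ s : ℂ, 1 / 2 < s.re → ψ s = LSeries c s := fun s hs =>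
    (LSeries.eq_of_tendsto_sum_Icc (LSeriesSummable_of_abscissaOfAbsConv_lt_re
      (habsc.trans_lt (by exact_mod_cast hs)))
      ((hψconv s.re (by linarith)).tendsto_at (le_refl s.re))).symm
  refine ⟨hc₀, hc₁, fun n hn => ?_⟩
  rcases hGH₁ hc₀.ge with hconst | hpos
  · have hzero : (fun x : ℝ => LSeries c x) =ᶠ[atTop] 0 :=
      (eventually_gt_atTop 1).mono fun x hx => by
        show LSeries c x = 0
        rw [← hψ x (by rw [ofReal_re]; linarith), (hconst x (by rw [ofReal_re]; linarith)).1, hc₁]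
    exact (LSeries_eventually_eq_zero_iff'.1 hzero).resolve_right
      (habsc.trans_lt (EReal.coe_lt_top _)).ne n (by omega)
  · obtain ⟨s, hs, hre⟩ := LSeries.exists_re_nonpos_of_apply_one_eq_zero hc₁
      (habsc.trans_lt (by exact_mod_cast (by norm_num : (1 / 2 : ℝ) < 1)))
    have := hpos s (by linarith)
    rw [hψ s (by linarith)] at this
    linarith

/-- Rigidity of the identity symbol: let `φ₁(s) = c₀ s + ψ(s)`,
`ψ(s) = Σ_{n≥1} c_n n^{-s}`, be a Gordon–Hedenmalm symbol. Suppose that for every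
finite set `Q` of primes the `Q`-projection `φ_{1,Q}` (given by a holomorphic
extension `Φ Q` to `ℂ₊` of `c₀ s + c₁ + Σ_{n ∈ ℕ_Q} c_n n^{-s}`) admits a finite
angular derivative at every boundary point `iα` with boundary value
`φ_{1,Q}(iα) = iα`. Then `φ₁(s) = s`, i.e. `c₀ = 1` and `c_n = 0` for all `n ≥ 1`. -/
theorem identity_symbol_rigidity
    (c₀ : ℕ) (c : ℕ → ℂ) (ψ : ℂ → ℂ)
    (hψconv : ∀ ε : ℝ, 0 < ε →
      TendstoUniformlyOn
        (fun (N : ℕ) (s : ℂ) => ∑ n ∈ Finset.Icc 1 N, c n * (n : ℂ) ^ (-s))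
        ψ atTop {s : ℂ | ε ≤ s.re})
    (hGH₀ : c₀ = 0 → ∀ s : ℂ, 0 < s.re → 1 / 2 < (ψ s).re)
    (hGH₁ : 1 ≤ c₀ →
      (∀ s : ℂ, 0 < s.re → ψ s = c 1 ∧ 0 ≤ (c 1).re) ∨
      (∀ s : ℂ, 0 < s.re → 0 < (ψ s).re))
    (habs : ∀ s : ℂ, 1 / 2 < s.re → Summable fun n : ℕ => ‖c n‖ * (n : ℝ) ^ (-s.re))
    (Φ : Finset ℕ → ℂ → ℂ)
    (hΦdiff : ∀ Q : Finset ℕ, (∀ p ∈ Q, p.Prime) →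
      DifferentiableOn ℂ (Φ Q) {s : ℂ | 0 < s.re})
    (hΦeq : ∀ Q : Finset ℕ, (∀ p ∈ Q, p.Prime) → ∀ s : ℂ, 1 / 2 < s.re →
      Φ Q s = (c₀ : ℂ) * s + c 1
        + ∑' n : ℕ, if 2 ≤ n ∧ ∀ p ∈ n.primeFactors, p ∈ Q then c n * (n : ℂ) ^ (-s) else 0)
    (hang : ∀ Q : Finset ℕ, (∀ p ∈ Q, p.Prime) → ∀ α : ℝ,
      ∃ C : ℝ, ∃ᶠ s in nhdsWithin ((α : ℂ) * Complex.I) {s : ℂ | 0 < s.re},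
        (Φ Q s).re / s.re ≤ C)
    (hrad : ∀ Q : Finset ℕ, (∀ p ∈ Q, p.Prime) → ∀ α : ℝ,
      Tendsto (fun σ : ℝ => Φ Q ((σ : ℂ) + (α : ℂ) * Complex.I))
        (nhdsWithin 0 (Set.Ioi 0)) (nhds ((α : ℂ) * Complex.I))) :
    c₀ = 1 ∧ c 1 = 0 ∧ ∀ n : ℕ, 2 ≤ n → c n = 0 :=
  identity_symbol_rigidity_general c₀ c ψ hψconv hGH₁ habs Φ hΦdiff hΦeq hrad
end
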